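/- As x → 1 within S = (0,1) ∪ (1,∞): (x−1)·x·ρ′(x)/ρ(x) → −k, and (x−1)² · h′(x) → k, where h(y) = y·ρ′(y)/ρ(y). In particular, x·ρ′(x)/ρ(x) + k/(x−1) extends continuously over x = 1. -/

import Mathlib

open Polynomial Matrix

/-- The matrix `A_m(z)` with rows `(z + α β⁻¹, α + β)` and `(z(α⁻¹+β⁻¹), z + β α⁻¹)`. -/
noncomputable def aztecA (a b : ℝ) (z : ℂ) : Matrix (Fin 2) (Fin 2) ℂ :=
  !![z + (a : ℂ) * ((b : ℂ))⁻¹, (a : ℂ) + (b : ℂ);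
     z * (((a : ℂ))⁻¹ + ((b : ℂ))⁻¹), z + (b : ℂ) * ((a : ℂ))⁻¹]

/-- `T(z) = A_1(z) A_2(z) ⋯ A_k(z)`. -/
noncomputable def aztecT {k : ℕ} (α β : Fin k → ℝ) (z : ℂ) : Matrix (Fin 2) (Fin 2) ℂ :=
  (List.ofFn fun m => aztecA (α m) (β m) z).prod

/-!
Near `x = 1` write `ρ(x) = w(x) / (x - 1)^k`, where `w(x) = (t + √(t² - 4(x - 1)^(2k))) / 2` with
`t = Tr T(x)` is the large eigenvalue of `T(x)`. Since `T(1)` is a product of matrices with positive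
entries, `Tr T(1) > 0`; so the discriminant is positive at `1` and `w` is smooth and nonzero there.
Then `x ρ'/ρ = x w'/w - k - k/(x - 1)` with `x w'/w` of class `C¹` at `1`, and the three limits
are read off from this identity.
-/

open Filter Topology

theorem Matrix.list_prod_pos {n R : Type*} [Fintype n] [DecidableEq n] [Nonempty n] [Semiring R]
    [PartialOrder R] [IsStrictOrderedRing R] {L : List (Matrix n n R)} (hL : L ≠ [])
    (hpos : ∀ M ∈ L, ∀ i j, 0 < M i j) (i j : n) : 0 < L.prod i j := by
  induction L generalizing i with
  | nil => exact absurd rfl hL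
  | cons M L ih =>
    rw [List.forall_mem_cons] at hpos
    rcases eq_or_ne L [] with rfl | hL'
    · simpa using hpos.1 i j
    · rw [List.prod_cons, Matrix.mul_apply]
      exact Finset.sum_pos (fun l _ => mul_pos (hpos.1 i l) (ih hL' hpos.2 l)) Finset.univ_nonempty

noncomputable def aztecAPoly (a b : ℝ) : Matrix (Fin 2) (Fin 2) ℝ[X] :=
  !![X + C (a * b⁻¹), C (a + b); C (a⁻¹ + b⁻¹) * X, X + C (b * a⁻¹)]

noncomputable def aztecTracePoly {k : ℕ} (α β : Fin k → ℝ) : ℝ[X] :=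
  trace (List.ofFn fun m => aztecAPoly (α m) (β m)).prod

theorem mapMatrix_aztecAPoly (a b : ℝ) (x : ℝ) :
    (Complex.ofRealHom.comp (evalRingHom x)).mapMatrix (aztecAPoly a b) = aztecA a b x := by
  ext i j
  fin_cases i <;> fin_cases j <;> simp [aztecAPoly, aztecA]; ring

theorem trace_aztecT_ofReal {k : ℕ} (α β : Fin k → ℝ) (x : ℝ) :
    trace (aztecT α β x) = (((aztecTracePoly α β).eval x : ℝ) : ℂ) := by
  let φ : ℝ[X] →+* ℂ := Complex.ofRealHom.comp (evalRingHom x)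
  have hT : φ.mapMatrix (List.ofFn fun m => aztecAPoly (α m) (β m)).prod = aztecT α β x := by
    simp only [map_list_prod, List.map_ofFn, aztecT]
    exact congrArg _ (congrArg _ (funext fun m => mapMatrix_aztecAPoly (α m) (β m) x))
  rw [← hT, RingHom.mapMatrix_apply, ← AddMonoidHom.map_trace φ]
  rfl

theorem aztecTracePoly_eval_one_pos {k : ℕ} (hk : 1 ≤ k) {α β : Fin k → ℝ}
    (hα : ∀ m, 0 < α m) (hβ : ∀ m, 0 < β m) : 0 < (aztecTracePoly α β).eval 1 := by
  let ψ : ℝ[X] →+* ℝ := evalRingHom 1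
  have hpos : ∀ i j, 0 < (List.ofFn fun m => ψ.mapMatrix (aztecAPoly (α m) (β m))).prod i j := by
    refine Matrix.list_prod_pos (by rw [ne_eq, List.ofFn_eq_nil_iff]; omega) ?_
    simp only [List.forall_mem_ofFn_iff]
    intro m i j
    have := hα m; have := hβ m
    fin_cases i <;> fin_cases j <;> simp [aztecAPoly, ψ] <;> positivity
  have hT : ψ.mapMatrix (List.ofFn fun m => aztecAPoly (α m) (β m)).prod
      = (List.ofFn fun m => ψ.mapMatrix (aztecAPoly (α m) (β m))).prod := by
    simp only [map_list_prod, List.map_ofFn]; rfl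
  have := add_pos (hpos 0 0) (hpos 1 1)
  rw [← trace_fin_two, ← hT, RingHom.mapMatrix_apply, ← AddMonoidHom.map_trace ψ]
    at this
  exact this

theorem mul_eq_larger_root_of_quadratic {q t r : ℝ} (hq : q ≠ 0) (ht : 0 < t) (hr : 1 < |r|)
    (h : q * r ^ 2 - t * r + q = 0) : q * r = (t + √(t ^ 2 - 4 * q ^ 2)) / 2 := by
  set u := q * r
  have hu : u ^ 2 - t * u + q ^ 2 = 0 := by linear_combination q * h
  have hq2 : 0 < q ^ 2 := by positivity
  have hu_pos : 0 < u := by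
    by_contra! hu0
    nlinarith [mul_nonneg ht.le (neg_nonneg.2 hu0)]
  have hqu : q ^ 2 < u ^ 2 := by
    have : |q| < |u| := by
      rw [abs_mul]; exact lt_mul_of_one_lt_right (abs_pos.2 hq) hr
    simpa only [sq_abs] using pow_lt_pow_left₀ this (abs_nonneg q) two_ne_zero
  -- `u` and `t - u` are the roots, with product `q ^ 2 < u ^ 2`, so `u` is the larger one
  have ht_le : t ≤ 2 * u := by nlinarith
  have hsqrt : √(t ^ 2 - 4 * q ^ 2) = 2 * u - t := by
    rw [show t ^ 2 - 4 * q ^ 2 = (2 * u - t) ^ 2 by linear_combination -4 * hu]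
    exact Real.sqrt_sq (by linarith)
  rw [hsqrt]
  ring

/-- `(x - 1) ^ k ρ(x)`: the larger root of `u² - Tr T(x) u + (x - 1) ^ (2k)`, i.e. the large
eigenvalue of `T(x)`, since `det A_m(z) = (z - 1)²`. -/
noncomputable def aztecLargeEigenvalue {k : ℕ} (α β : Fin k → ℝ) (x : ℝ) : ℝ :=
  ((aztecTracePoly α β).eval x
    + √(((aztecTracePoly α β).eval x) ^ 2 - 4 * ((x - 1) ^ k) ^ 2)) / 2

section AztecLargeEigenvalue

variable {k : ℕ} {α β : Fin k → ℝ}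

theorem aztecLargeEigenvalue_one_pos (hk : 1 ≤ k) (hα : ∀ m, 0 < α m) (hβ : ∀ m, 0 < β m) :
    0 < aztecLargeEigenvalue α β 1 := by
  have := aztecTracePoly_eval_one_pos hk hα hβ
  unfold aztecLargeEigenvalue
  positivity

theorem contDiffAt_aztecLargeEigenvalue_one (hk : 1 ≤ k) (hα : ∀ m, 0 < α m)
    (hβ : ∀ m, 0 < β m) : ContDiffAt ℝ 2 (aztecLargeEigenvalue α β) 1 := by
  have ht := (aztecTracePoly α β).contDiff_aeval (𝕜 := ℝ) 2
  simp only [aeval_def, eval₂_id, Algebra.algebraMap_self] at ht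
  refine ((ht.contDiffAt.add (ContDiffAt.sqrt (by fun_prop) ?_)).div_const 2)
  simpa [zero_pow (by omega : k ≠ 0)] using (pow_pos (aztecTracePoly_eval_one_pos hk hα hβ) 2).ne'

theorem eventuallyEq_aztecLargeEigenvalue_div_pow (hk : 1 ≤ k) (hα : ∀ m, 0 < α m)
    (hβ : ∀ m, 0 < β m) {ρ : ℝ → ℝ}
    (hρ : ∀ᶠ x : ℝ in 𝓝[≠] 1, ((x : ℂ) - 1) ^ k * ((ρ x : ℝ) : ℂ) ^ 2
      - trace (aztecT α β x) * ((ρ x : ℝ) : ℂ) + ((x : ℂ) - 1) ^ k = 0 ∧ 1 < |ρ x|) :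
    ρ =ᶠ[𝓝[≠] 1] fun x => aztecLargeEigenvalue α β x / (x - 1) ^ k := by
  have ht : ∀ᶠ x in 𝓝 (1 : ℝ), 0 < (aztecTracePoly α β).eval x :=
    continuousAt_const.eventually_lt (aztecTracePoly α β).continuous.continuousAt
      (aztecTracePoly_eval_one_pos hk hα hβ)
  filter_upwards [hρ, nhdsWithin_le_nhds ht, self_mem_nhdsWithin]
    with x ⟨hquad, hr⟩ htx (hx : x ≠ 1)
  have hq : (x - 1) ^ k ≠ 0 := pow_ne_zero _ (sub_ne_zero.2 hx)
  rw [trace_aztecT_ofReal] at hquad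
  have hquad' : (x - 1) ^ k * ρ x ^ 2 - (aztecTracePoly α β).eval x * ρ x + (x - 1) ^ k = 0 := by
    exact_mod_cast hquad
  rw [aztecLargeEigenvalue, ← mul_eq_larger_root_of_quadratic hq htx hr hquad',
    mul_div_cancel_left₀ _ hq]

end AztecLargeEigenvalue

section PoleOfOrder

variable {w ρ : ℝ → ℝ} {a : ℝ} {k : ℕ}

theorem logDeriv_eventuallyEq_of_eventuallyEq_div_pow
    (hw : ∀ᶠ x in 𝓝[≠] a, DifferentiableAt ℝ w x ∧ w x ≠ 0)
    (hρ : ρ =ᶠ[𝓝[≠] a] fun x => w x / (x - a) ^ k) :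
    logDeriv ρ =ᶠ[𝓝[≠] a] fun x => logDeriv w x - k / (x - a) := by
  filter_upwards [logDeriv_congr_nhdsNE hρ, hw, self_mem_nhdsWithin]
    with x hx ⟨hwd, hw0⟩ (hxa : x ≠ a)
  rw [hx, logDeriv_div (g := fun x => (x - a) ^ k) x hw0 (pow_ne_zero _ (sub_ne_zero.2 hxa))
    hwd (by fun_prop), logDeriv_fun_pow (by fun_prop)]
  simp [logDeriv_apply, div_eq_mul_inv]

theorem ContDiffAt.mul_logDeriv (hw : ContDiffAt ℝ 2 w a) (hwa : w a ≠ 0) :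
    ContDiffAt ℝ 1 (fun x => x * logDeriv w x) a :=
  contDiffAt_id.mul ((hw.derivWithin (m := 1) le_rfl).div (hw.of_le one_le_two) hwa)

theorem mul_logDeriv_eventuallyEq_of_eventuallyEq_div_pow (hw : ContDiffAt ℝ 2 w a)
    (hwa : w a ≠ 0) (hρ : ρ =ᶠ[𝓝[≠] a] fun x => w x / (x - a) ^ k) :
    (fun x => x * logDeriv ρ x) =ᶠ[𝓝[≠] a] fun x => x * logDeriv w x - k - k * a / (x - a) := by
  have hw' : ∀ᶠ x in 𝓝[≠] a, DifferentiableAt ℝ w x ∧ w x ≠ 0 :=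
    nhdsWithin_le_nhds <| ((hw.eventually (by simp)).and (hw.continuousAt.eventually_ne hwa)).mono
      fun x hx => ⟨hx.1.differentiableAt two_ne_zero, hx.2⟩
  filter_upwards [logDeriv_eventuallyEq_of_eventuallyEq_div_pow hw' hρ, self_mem_nhdsWithin]
    with x hx (hxa : x ≠ a)
  have : x - a ≠ 0 := sub_ne_zero.2 hxa
  rw [hx]
  field_simp
  ring

theorem deriv_mul_logDeriv_eventuallyEq_of_eventuallyEq_div_pow (hw : ContDiffAt ℝ 2 w a)
    (hwa : w a ≠ 0) (hρ : ρ =ᶠ[𝓝[≠] a] fun x => w x / (x - a) ^ k) :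
    deriv (fun x => x * logDeriv ρ x) =ᶠ[𝓝[≠] a]
      fun x => deriv (fun y => y * logDeriv w y) x + k * a / (x - a) ^ 2 := by
  filter_upwards [(mul_logDeriv_eventuallyEq_of_eventuallyEq_div_pow hw hwa hρ).nhdsNE_deriv,
    nhdsWithin_le_nhds ((hw.mul_logDeriv hwa).eventually (by simp)), self_mem_nhdsWithin]
    with x hx hdiff (hxa : x ≠ a)
  have hxa' : x - a ≠ 0 := sub_ne_zero.2 hxa
  have hpole : HasDerivAt (fun y => (k : ℝ) * a / (y - a)) (-(k * a / (x - a) ^ 2)) x := by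
    simpa [div_eq_mul_inv, mul_comm] using
      ((hasDerivAt_inv hxa').comp x ((hasDerivAt_id x).sub_const a)).const_mul ((k : ℝ) * a)
  rw [hx, (((hdiff.differentiableAt one_ne_zero).hasDerivAt.sub_const (k : ℝ)).fun_sub hpole).deriv,
    sub_neg_eq_add]

theorem tendsto_sub_mul_mul_logDeriv_of_eventuallyEq_div_pow (hw : ContDiffAt ℝ 2 w a)
    (hwa : w a ≠ 0) (hρ : ρ =ᶠ[𝓝[≠] a] fun x => w x / (x - a) ^ k) :
    Tendsto (fun x => (x - a) * x * logDeriv ρ x) (𝓝[≠] a) (𝓝 (-(k * a))) := by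
  have hcont : ContinuousAt (fun x => (x - a) * (x * logDeriv w x - k) - k * a) a :=
    ((continuousAt_id.sub continuousAt_const).mul
      ((hw.mul_logDeriv hwa).continuousAt.sub continuousAt_const)).sub continuousAt_const
  refine (hcont.tendsto.mono_left nhdsWithin_le_nhds).congr' ?_ |>.trans (by simp)
  filter_upwards [mul_logDeriv_eventuallyEq_of_eventuallyEq_div_pow hw hwa hρ,
    self_mem_nhdsWithin] with x hx (hxa : x ≠ a)
  have hxa' : x - a ≠ 0 := sub_ne_zero.2 hxa
  rw [mul_assoc, hx]
  field_simp

theorem tendsto_sq_mul_deriv_mul_logDeriv_of_eventuallyEq_div_pow (hw : ContDiffAt ℝ 2 w a)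
    (hwa : w a ≠ 0) (hρ : ρ =ᶠ[𝓝[≠] a] fun x => w x / (x - a) ^ k) :
    Tendsto (fun x => (x - a) ^ 2 * deriv (fun y => y * logDeriv ρ y) x) (𝓝[≠] a)
      (𝓝 (k * a)) := by
  have hcont : ContinuousAt
      (fun x => (x - a) ^ 2 * deriv (fun y => y * logDeriv w y) x + k * a) a :=
    (((continuousAt_id.sub continuousAt_const).pow 2).mul
      ((hw.mul_logDeriv hwa).derivWithin (m := 0) le_rfl).continuousAt).add continuousAt_const
  refine (hcont.tendsto.mono_left nhdsWithin_le_nhds).congr' ?_ |>.trans (by simp)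
  filter_upwards [deriv_mul_logDeriv_eventuallyEq_of_eventuallyEq_div_pow hw hwa hρ,
    self_mem_nhdsWithin] with x hx (hxa : x ≠ a)
  have hxa' : x - a ≠ 0 := sub_ne_zero.2 hxa
  rw [hx]
  field_simp

theorem tendsto_mul_logDeriv_add_of_eventuallyEq_div_pow (hw : ContDiffAt ℝ 2 w a)
    (hwa : w a ≠ 0) (hρ : ρ =ᶠ[𝓝[≠] a] fun x => w x / (x - a) ^ k) :
    Tendsto (fun x => x * logDeriv ρ x + k * a / (x - a)) (𝓝[≠] a)
      (𝓝 (a * logDeriv w a - k)) := by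
  refine (((hw.mul_logDeriv hwa).continuousAt.sub continuousAt_const).tendsto.mono_left
    nhdsWithin_le_nhds).congr' ?_
  filter_upwards [mul_logDeriv_eventuallyEq_of_eventuallyEq_div_pow hw hwa hρ] with x hx
  simp only [Pi.sub_apply, hx, sub_add_cancel]

end PoleOfOrder

theorem stmt19_general (k : ℕ) (hk : 1 ≤ k) (α β : Fin k → ℝ)
    (hα : ∀ m, 0 < α m) (hβ : ∀ m, 0 < β m)
    (ρ : ℝ → ℝ)
    (heig : ∀ x ∈ Set.Ioo (0 : ℝ) 1 ∪ Set.Ioi (1 : ℝ),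
        ((x : ℂ) - 1) ^ k * ((ρ x : ℝ) : ℂ) ^ 2
          - Matrix.trace (aztecT α β (x : ℂ)) * ((ρ x : ℝ) : ℂ)
          + ((x : ℂ) - 1) ^ k = 0)
    (habs : ∀ x ∈ Set.Ioo (0 : ℝ) 1 ∪ Set.Ioi (1 : ℝ), 1 < |ρ x|) :
    Tendsto (fun x : ℝ => (x - 1) * x * deriv ρ x / ρ x)
      (nhdsWithin 1 (Set.Ioo (0 : ℝ) 1 ∪ Set.Ioi 1)) (nhds (-(k : ℝ))) ∧
    Tendsto (fun x : ℝ => (x - 1) ^ 2 * deriv (fun y : ℝ => y * deriv ρ y / ρ y) x)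
      (nhdsWithin 1 (Set.Ioo (0 : ℝ) 1 ∪ Set.Ioi 1)) (nhds (k : ℝ)) ∧
    ∃ c : ℝ, Tendsto (fun x : ℝ => x * deriv ρ x / ρ x + (k : ℝ) / (x - 1))
      (nhdsWithin 1 (Set.Ioo (0 : ℝ) 1 ∪ Set.Ioi 1)) (nhds c) := by
  set S : Set ℝ := Set.Ioo 0 1 ∪ Set.Ioi 1
  have hS : S ∈ 𝓝[≠] (1 : ℝ) := by
    refine mem_of_superset (inter_mem_nhdsWithin _ (Ioi_mem_nhds zero_lt_one)) ?_
    rintro x ⟨hx1 : x ≠ 1, hx0 : 0 < x⟩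
    rcases hx1.lt_or_gt with hx1 | hx1
    exacts [Or.inl ⟨hx0, hx1⟩, Or.inr hx1]
  have hSle : 𝓝[S] (1 : ℝ) ≤ 𝓝[≠] 1 :=
    nhdsWithin_mono _ fun x hx => hx.elim (fun hx => hx.2.ne) fun hx : 1 < x => hx.ne'
  have hρ := eventuallyEq_aztecLargeEigenvalue_div_pow hk hα hβ
    (mem_of_superset hS fun x hx => ⟨heig x hx, habs x hx⟩)
  have hw := contDiffAt_aztecLargeEigenvalue_one hk hα hβ
  have hw1 := (aztecLargeEigenvalue_one_pos hk hα hβ).ne'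
  simp only [mul_div_assoc, ← logDeriv_apply]
  refine ⟨?_, ?_, ?_⟩
  · simpa using (tendsto_sub_mul_mul_logDeriv_of_eventuallyEq_div_pow hw hw1 hρ).mono_left hSle
  · simpa using
      (tendsto_sq_mul_deriv_mul_logDeriv_of_eventuallyEq_div_pow hw hw1 hρ).mono_left hSle
  · exact ⟨_, by simpa using
      (tendsto_mul_logDeriv_add_of_eventuallyEq_div_pow hw hw1 hρ).mono_left hSle⟩

/-- as `x → 1` within `S = (0,1) ∪ (1,∞)`, `(x−1) x ρ′(x)/ρ(x) → −k` and
`(x−1)² h′(x) → k` where `h(y) = y ρ′(y)/ρ(y)`; in particular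
`x ρ′(x)/ρ(x) + k/(x−1)` extends continuously over `x = 1`. -/
theorem stmt19 (k : ℕ) (hk : 1 ≤ k) (α β : Fin k → ℝ)
    (hα : ∀ m, 0 < α m) (hβ : ∀ m, 0 < β m)
    (hprod : ∏ m, α m = ∏ m, β m)
    (ρ : ℝ → ℝ)
    (hsmooth : ContDiffOn ℝ 2 ρ (Set.Ioo 0 1 ∪ Set.Ioi 1))
    (heig : ∀ x ∈ Set.Ioo (0 : ℝ) 1 ∪ Set.Ioi (1 : ℝ),
        ((x : ℂ) - 1) ^ k * ((ρ x : ℝ) : ℂ) ^ 2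
          - Matrix.trace (aztecT α β (x : ℂ)) * ((ρ x : ℝ) : ℂ)
          + ((x : ℂ) - 1) ^ k = 0)
    (habs : ∀ x ∈ Set.Ioo (0 : ℝ) 1 ∪ Set.Ioi (1 : ℝ), 1 < |ρ x|) :
    Tendsto (fun x : ℝ => (x - 1) * x * deriv ρ x / ρ x)
      (nhdsWithin 1 (Set.Ioo (0 : ℝ) 1 ∪ Set.Ioi 1)) (nhds (-(k : ℝ))) ∧
    Tendsto (fun x : ℝ => (x - 1) ^ 2 * deriv (fun y : ℝ => y * deriv ρ y / ρ y) x)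
      (nhdsWithin 1 (Set.Ioo (0 : ℝ) 1 ∪ Set.Ioi 1)) (nhds (k : ℝ)) ∧
    ∃ c : ℝ, Tendsto (fun x : ℝ => x * deriv ρ x / ρ x + (k : ℝ) / (x - 1))
      (nhdsWithin 1 (Set.Ioo (0 : ℝ) 1 ∪ Set.Ioi 1)) (nhds c) :=
  stmt19_general k hk α β hα hβ ρ heig habs
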